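/- arXiv:1205.5003 — 7 statements merged into one kernel-verified Lean document; each statement's English description precedes it below -/
import Mathlib

section
/- If a deterministic exploration protocol terminates on every execution, then in any execution (a sequence of configurations where consecutive configurations differ and each step is induced by the protocol), no two distinct configurations in the execution are indistinguishable (i.e., no configuration is a rotation of another or a rotation of another's mirror). -/
/-- Rotation of a ring configuration by `i`. -/
def rotate {n : ℕ} (γ : ZMod n → ℕ) (i : ZMod n) : ZMod n → ℕ := fun j => γ (j + i)

/-- Mirror image of a ring configuration. -/
def mirror {n : ℕ} (γ : ZMod n → ℕ) : ZMod n → ℕ := fun j => γ (-j)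

/-- Two configurations are indistinguishable if one is a rotation of the other,
or a rotation of the other's mirror. -/
def Indist {n : ℕ} (γ γ' : ZMod n → ℕ) : Prop :=
  ∃ i, γ' = rotate γ i ∨ γ' = rotate (mirror γ) i

lemma rotate_rotate {n : ℕ} (γ : ZMod n → ℕ) (a b : ZMod n) :
    rotate (rotate γ a) b = rotate γ (b + a) := by
  funext j; simp only [rotate]; congr 1; ring

lemma mirror_rotate {n : ℕ} (γ : ZMod n → ℕ) (a : ZMod n) :
    mirror (rotate γ a) = rotate (mirror γ) (-a) := by
  funext j; simp only [rotate, mirror]; congr 1; ring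

lemma mirror_mirror {n : ℕ} (γ : ZMod n → ℕ) : mirror (mirror γ) = γ := by
  funext j; simp [mirror]

lemma Indist.refl {n : ℕ} (γ : ZMod n → ℕ) : Indist γ γ :=
  ⟨0, Or.inl (by funext j; simp [rotate])⟩

lemma Indist.symm {n : ℕ} {γ γ' : ZMod n → ℕ} (h : Indist γ γ') : Indist γ' γ := by
  obtain ⟨a, h | h⟩ := h
  · refine ⟨-a, Or.inl ?_⟩
    subst h; rw [rotate_rotate]; funext k; simp [rotate]
  · refine ⟨a, Or.inr ?_⟩
    subst h
    rw [mirror_rotate, rotate_rotate, mirror_mirror]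
    funext j; simp only [rotate]; congr 1; ring

lemma Indist.trans {n : ℕ} {γ γ' γ'' : ZMod n → ℕ}
    (h1 : Indist γ γ') (h2 : Indist γ' γ'') : Indist γ γ'' := by
  obtain ⟨a, h1 | h1⟩ := h1 <;> obtain ⟨b, h2 | h2⟩ := h2 <;> subst h1 <;> subst h2
  · exact ⟨b + a, Or.inl (rotate_rotate γ a b)⟩
  · exact ⟨b + -a, Or.inr (by rw [mirror_rotate, rotate_rotate])⟩
  · exact ⟨b + a, Or.inr (rotate_rotate (mirror γ) a b)⟩
  · exact ⟨b + -a, Or.inl (by rw [mirror_rotate, rotate_rotate, mirror_mirror])⟩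

lemma infinite_chain_of_indist
    (n : ℕ) (step : (ZMod n → ℕ) → (ZMod n → ℕ) → Prop)
    (hdet : ∀ γ γ' δ, Indist γ γ' → step γ δ → ∃ δ', step γ' δ' ∧ Indist δ δ')
    (e : ℕ → (ZMod n → ℕ)) (N : ℕ)
    (hsteps : ∀ t, t < N → step (e t) (e (t + 1)))
    (i j : ℕ) (hij : i < j) (hjN : j ≤ N) (hind : Indist (e i) (e j)) :
    ∃ e' : ℕ → (ZMod n → ℕ), ∀ t, step (e' t) (e' (t + 1)) := by
  classical
  set S := {p : (ZMod n → ℕ) × ℕ // i ≤ p.2 ∧ p.2 < j ∧ Indist (e p.2) p.1} with hS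
  have exists_next : ∀ p : S, ∃ q : S, step p.1.1 q.1.1 := by
    rintro ⟨⟨γ, r⟩, hr1, hr2, hI⟩
    have hstep : step (e r) (e (r + 1)) := hsteps r (lt_of_lt_of_le hr2 hjN)
    obtain ⟨δ', hδstep, hδI⟩ := hdet (e r) γ (e (r + 1)) hI hstep
    by_cases h : r + 1 < j
    · exact ⟨⟨(δ', r + 1), le_trans hr1 (Nat.le_succ r), h, hδI⟩, hδstep⟩
    · have hrj : r + 1 = j := le_antisymm hr2 (not_lt.mp h)
      refine ⟨⟨(δ', i), le_refl i, hij, ?_⟩, hδstep⟩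
      exact hind.trans (hrj ▸ hδI)
  let next : S → S := fun p => (exists_next p).choose
  have hnext : ∀ p : S, step p.1.1 (next p).1.1 := fun p => (exists_next p).choose_spec
  let base : S := ⟨(e i, i), le_refl i, hij, Indist.refl (e i)⟩
  refine ⟨fun t => (next^[t] base).1.1, fun t => ?_⟩
  show step (next^[t] base).1.1 (next^[t+1] base).1.1
  rw [Function.iterate_succ_apply']
  exact hnext _

/-- For a deterministic protocol (modeled as a step relation on
configurations where consecutive configurations differ, and which is deterministic up to
symmetry: from indistinguishable configurations, corresponding steps lead to
indistinguishable configurations), if the protocol terminates on every execution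
(no infinite chain of steps exists), then in any execution no two distinct
configurations are indistinguishable. -/
theorem no_indistinguishable_revisit
    (n : ℕ) (step : (ZMod n → ℕ) → (ZMod n → ℕ) → Prop)
    (hdiff : ∀ γ δ, step γ δ → δ ≠ γ)
    (hdet : ∀ γ γ' δ, Indist γ γ' → step γ δ → ∃ δ', step γ' δ' ∧ Indist δ δ')
    (hterm : ¬ ∃ e : ℕ → (ZMod n → ℕ), ∀ t, step (e t) (e (t + 1)))
    (e : ℕ → (ZMod n → ℕ)) (N : ℕ)
    (hsteps : ∀ t, t < N → step (e t) (e (t + 1))) :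
    ∀ i j, i ≤ N → j ≤ N → e i ≠ e j → ¬ Indist (e i) (e j) := by
  intro i j hi hj hne hind
  rcases lt_trichotomy i j with h | h | h
  · exact hterm (infinite_chain_of_indist n step hdet e N hsteps i j h hj hind)
  · exact hne (h ▸ rfl)
  · exact hterm (infinite_chain_of_indist n step hdet e N hsteps j i h hi hind.symm)
end

section
/- For any n > 1, a single robot (k = 1) on an anonymous unoriented ring of n nodes with visibility radius 1 cannot solve terminating exploration: from a configuration where the robot sees no other robot, its local view is symmetric, all configurations reachable are indistinguishable from the initial one, so by the indistinguishability theorem no deterministic terminating exploration protocol exists. -/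
/-- A deterministic protocol for myopic robots with visibility `φ = 1`: given the view
`(a, b, c)` (multiplicities of the left neighbor, own node, right neighbor), `moves a b c d`
holds if a robot with this view may move in direction `d` (`true` = toward the `c` side).
Since the ring is unoriented, the rule set must be invariant under reversing the view. -/
structure Protocol1 where
  moves : ℕ → ℕ → ℕ → Bool → Prop
  rev : ∀ a b c d, moves a b c d ↔ moves c b a (!d)

/-- A robot (on an occupied node `j`) is enabled if some move is allowed by its view. -/
def enabled {n : ℕ} (P : Protocol1) (γ : ZMod n → ℕ) (j : ZMod n) : Prop :=
  0 < γ j ∧ ∃ d, P.moves (γ (j - 1)) (γ j) (γ (j + 1)) d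

/-- Semi-synchronous step: the adversary activates a nonempty set of robots
(`L j`/`R j` robots of node `j` move left/right, as allowed by the protocol). -/
def SStep {n : ℕ} (P : Protocol1) (γ δ : ZMod n → ℕ) : Prop :=
  ∃ L R : ZMod n → ℕ,
    (∀ j, L j + R j ≤ γ j) ∧ (∃ j, 0 < L j + R j) ∧
    (∀ j, 0 < L j → P.moves (γ (j - 1)) (γ j) (γ (j + 1)) false) ∧
    (∀ j, 0 < R j → P.moves (γ (j - 1)) (γ j) (γ (j + 1)) true) ∧
    (∀ j, δ j = γ j - (L j + R j) + L (j + 1) + R (j - 1))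

/-- Fully synchronous step: every enabled robot moves, in a direction allowed by its rule. -/
def FStep {n : ℕ} (P : Protocol1) (γ δ : ZMod n → ℕ) : Prop :=
  ∃ L R : ZMod n → ℕ,
    (∀ j, (enabled P γ j → L j + R j = γ j) ∧ (¬ enabled P γ j → L j + R j = 0)) ∧
    (∀ j, 0 < L j → P.moves (γ (j - 1)) (γ j) (γ (j + 1)) false) ∧
    (∀ j, 0 < R j → P.moves (γ (j - 1)) (γ j) (γ (j + 1)) true) ∧
    (∀ j, δ j = γ j - (L j + R j) + L (j + 1) + R (j - 1))

/-- A configuration is terminal when no robot is enabled. -/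
def Terminal1 {n : ℕ} (P : Protocol1) (γ : ZMod n → ℕ) : Prop := ∀ j, ¬ enabled P γ j

/-- For any `n > 1`, a single robot (`k = 1`) with visibility `φ = 1`
cannot solve terminating exploration of the ring of `n` nodes: there is no protocol such
that every (semi-synchronous) execution starting from the single-robot configuration
terminates with every node having been visited. -/
theorem single_robot_cannot_explore (n : ℕ) [NeZero n] (hn : 1 < n) (P : Protocol1) :
    ¬ (∀ e : ℕ → (ZMod n → ℕ),
        e 0 = (fun j => if j = 0 then 1 else 0) →
        (∀ t, SStep P (e t) (e (t + 1)) ∨ (Terminal1 P (e t) ∧ e (t + 1) = e t)) →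
        (∃ N, Terminal1 P (e N)) ∧ (∀ u : ZMod n, ∃ t, 0 < e t u)) := by
  haveI : Fact (1 < n) := ⟨hn⟩
  have h10 : (1 : ZMod n) ≠ 0 := one_ne_zero
  intro H
  by_cases h : ∃ d, P.moves 0 1 0 d
  · -- robot is enabled: move right forever
    obtain ⟨d, hd⟩ := h
    have hright : P.moves 0 1 0 true := by
      cases d with
      | true => exact hd
      | false => simpa using (P.rev 0 1 0 false).mp hd
    set e : ℕ → (ZMod n → ℕ) := fun t j => if j = (t : ZMod n) then 1 else 0 with he
    have hview : ∀ t : ℕ, ∀ j : ZMod n, j ≠ (t : ZMod n) → e t j = 0 := by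
      intro t j hj; simp [he, hj]
    have hstep : ∀ t, SStep P (e t) (e (t + 1)) ∨ (Terminal1 P (e t) ∧ e (t + 1) = e t) := by
      intro t
      left
      refine ⟨0, fun j => if j = (t : ZMod n) then 1 else 0, ?_, ⟨(t : ZMod n), by simp⟩, ?_, ?_, ?_⟩
      · intro j; by_cases hj : j = (t : ZMod n) <;> simp [he, hj]
      · intro j hj; simp at hj
      · intro j hj
        have hj' : j = (t : ZMod n) := by by_contra hc; simp [hc] at hj
        subst hj'
        have h1 : ((t : ZMod n) - 1) ≠ (t : ZMod n) := by
          intro hc; apply h10; linear_combination -hc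
        have h2 : ((t : ZMod n) + 1) ≠ (t : ZMod n) := by
          intro hc; apply h10; linear_combination hc
        simpa [he, h1, h2] using hright
      · intro j
        have hcast : ((t + 1 : ℕ) : ZMod n) = (t : ZMod n) + 1 := by push_cast; ring
        by_cases hj : j = (t : ZMod n)
        · subst hj
          have h1 : ((t : ZMod n) - 1) ≠ (t : ZMod n) := by
            intro hc; apply h10; linear_combination -hc
          have h2 : (t : ZMod n) ≠ (t : ZMod n) + 1 := by
            intro hc; apply h10; linear_combination -hc
          simp [he, hcast, h1, h2]
        · by_cases hj2 : j = (t : ZMod n) + 1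
          · subst hj2
            have h3 : (t : ZMod n) + 1 - 1 = (t : ZMod n) := by ring
            simp [he, hcast, hj, h3]
          · have h4 : j - 1 ≠ (t : ZMod n) := by
              intro hc; apply hj2; linear_combination hc
            simp [he, hcast, hj, hj2, h4]
    obtain ⟨⟨N, hN⟩, _⟩ := H e (by simp [he]) hstep
    exact hN (N : ZMod n) ⟨by simp [he], ⟨true, by
      have h1 : ((N : ZMod n) - 1) ≠ (N : ZMod n) := by
        intro hc; apply h10; linear_combination -hc
      have h2 : ((N : ZMod n) + 1) ≠ (N : ZMod n) := by
        intro hc; apply h10; linear_combination hc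
      simpa [he, h1, h2] using hright⟩⟩
  · -- robot is never enabled: stay put, node 1 is never visited
    set γ0 : ZMod n → ℕ := fun j => if j = 0 then 1 else 0 with hγ0
    have hterm : Terminal1 P γ0 := by
      intro j ⟨hpos, d, hm⟩
      have hj : j = 0 := by by_contra hc; simp [hγ0, hc] at hpos
      subst hj
      have hm1 : (-1 : ZMod n) ≠ 0 := by
        intro hc; apply h10; linear_combination -hc
      apply h
      refine ⟨d, ?_⟩
      simpa [hγ0, hm1, h10, sub_eq_add_neg] using hm
    obtain ⟨_, hvisit⟩ := H (fun _ => γ0) rfl (fun t => Or.inr ⟨hterm, rfl⟩)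
    obtain ⟨t, ht⟩ := hvisit 1
    simp [hγ0, h10] at ht
end

section
/- On a ring of n nodes with k = 2 robots and visibility φ = 1, starting from a towerless configuration where the two robots occupy adjacent nodes, any move by a single robot (simultaneous or not) yields a configuration indistinguishable from a previously visited one or a terminal configuration in which not all nodes are explored when n > 2; hence no semi-synchronous deterministic exploration protocol exists for k = 2 and n > 2. -/
-- ==== auxiliary material ====

lemma TR.zmod_cast_ne (n : ℕ) [NeZero n] (a b : ℕ) (ha : a < n) (hb : b < n) (hab : a ≠ b) :
    (a : ZMod n) ≠ (b : ZMod n) := by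
  intro h
  have := congrArg ZMod.val h
  rw [ZMod.val_cast_of_lt ha, ZMod.val_cast_of_lt hb] at this
  exact hab this

section TRfacts
variable (n : ℕ) [NeZero n]

lemma TR.f10 (hn : 2 < n) : (1 : ZMod n) ≠ 0 := by
  have := TR.zmod_cast_ne n 1 0 (by omega) (by omega) (by omega); simpa using this
lemma TR.f20 (hn : 2 < n) : (2 : ZMod n) ≠ 0 := by
  have := TR.zmod_cast_ne n 2 0 (by omega) (by omega) (by omega); simpa using this
lemma TR.f21 (hn : 2 < n) : (2 : ZMod n) ≠ 1 := by
  have := TR.zmod_cast_ne n 2 1 (by omega) (by omega) (by omega); simpa using this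
lemma TR.f01 (hn : 2 < n) : (0 : ZMod n) ≠ 1 := (TR.f10 n hn).symm
lemma TR.f31 (hn : 2 < n) : (3 : ZMod n) ≠ 1 := fun h => TR.f20 n hn (by linear_combination h)
lemma TR.f32 (hn : 2 < n) : (3 : ZMod n) ≠ 2 := fun h => TR.f10 n hn (by linear_combination h)
lemma TR.fm0 (hn : 2 < n) : (-1 : ZMod n) ≠ 0 := fun h => TR.f10 n hn (by linear_combination -h)
lemma TR.fm1 (hn : 2 < n) : (-1 : ZMod n) ≠ 1 := fun h => TR.f20 n hn (by linear_combination -h)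
lemma TR.f30 (hn4 : 3 < n) : (3 : ZMod n) ≠ 0 := by
  have := TR.zmod_cast_ne n 3 0 (by omega) (by omega) (by omega); simpa using this
lemma TR.fm2 (hn4 : 3 < n) : (-1 : ZMod n) ≠ 2 := fun h => TR.f30 n hn4 (by linear_combination -h)

end TRfacts

/-- adjacent pair at 0,1 -/
def TR.cfgA (n : ℕ) : ZMod n → ℕ := fun j => if j = 0 ∨ j = 1 then 1 else 0
/-- tower at 1 -/
def TR.cfgT (n : ℕ) : ZMod n → ℕ := fun j => if j = 1 then 2 else 0
/-- separated pair at 0,2 -/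
def TR.cfgS (n : ℕ) : ZMod n → ℕ := fun j => if j = 0 ∨ j = 2 then 1 else 0

lemma TR.sstep_single {n : ℕ} [NeZero n] (P : Protocol1) (γ δ : ZMod n → ℕ) (j0 : ZMod n) (d : Bool)
    (hocc : 0 < γ j0)
    (hmove : P.moves (γ (j0 - 1)) (γ j0) (γ (j0 + 1)) d)
    (hδ : ∀ j, δ j = γ j - (if j = j0 then 1 else 0)
        + (if j + 1 = j0 ∧ d = false then 1 else 0)
        + (if j - 1 = j0 ∧ d = true then 1 else 0)) :
    SStep P γ δ := by
  refine ⟨fun j => if j = j0 ∧ d = false then 1 else 0,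
         fun j => if j = j0 ∧ d = true then 1 else 0, ?_, ⟨j0, ?_⟩, ?_, ?_, ?_⟩
  · intro j
    by_cases hj : j = j0
    · subst hj; cases d <;> simp <;> omega
    · simp [hj]
  · cases d <;> simp
  · intro j hj
    by_cases hj' : j = j0 ∧ d = false
    · obtain ⟨rfl, hd⟩ := hj'; subst hd; exact hmove
    · simp [hj'] at hj
  · intro j hj
    by_cases hj' : j = j0 ∧ d = true
    · obtain ⟨rfl, hd⟩ := hj'; subst hd; exact hmove
    · simp [hj'] at hj
  · intro j
    have h : (if j = j0 ∧ d = false then 1 else 0) + (if j = j0 ∧ d = true then 1 else 0)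
        = (if j = j0 then 1 else 0) := by
      by_cases hj : j = j0 <;> cases d <;> simp [hj]
    simp only
    rw [h]
    exact hδ j

section TRsteps
variable (n : ℕ) [NeZero n] (P : Protocol1)

open TR

/-- view of the robot at 0 in cfgA -/
lemma TR.viewA0 (hn : 2 < n) (d : Bool) :
    P.moves (cfgA n (0 - 1)) (cfgA n 0) (cfgA n (0 + 1)) d ↔ P.moves 0 1 1 d := by
  rw [show (0:ZMod n) - 1 = -1 by ring, show (0:ZMod n) + 1 = 1 by ring,
    show cfgA n (-1) = 0 by simp [cfgA, fm0 n hn, fm1 n hn],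
    show cfgA n 0 = 1 by simp [cfgA], show cfgA n 1 = 1 by simp [cfgA]]

lemma TR.viewT1 (hn : 2 < n) (d : Bool) :
    P.moves (cfgT n (1 - 1)) (cfgT n 1) (cfgT n (1 + 1)) d ↔ P.moves 0 2 0 d := by
  rw [show (1:ZMod n) - 1 = 0 by ring, show (1:ZMod n) + 1 = 2 by ring,
    show cfgT n 0 = 0 by simp [cfgT, f01 n hn],
    show cfgT n 1 = 2 by simp [cfgT], show cfgT n 2 = 0 by simp [cfgT, f21 n hn]]

lemma TR.viewA1 (hn : 2 < n) (d : Bool) :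
    P.moves (cfgA n (1 - 1)) (cfgA n 1) (cfgA n (1 + 1)) d ↔ P.moves 1 1 0 d := by
  rw [show (1:ZMod n) - 1 = 0 by ring, show (1:ZMod n) + 1 = 2 by ring,
    show cfgA n 0 = 1 by simp [cfgA], show cfgA n 1 = 1 by simp [cfgA],
    show cfgA n 2 = 0 by simp [cfgA, f20 n hn, f21 n hn]]

/-- Step cfgA → cfgT : robot at 0 moves right onto 1. -/
lemma TR.stepAT (hn : 2 < n) (hA : P.moves 0 1 1 true) : SStep P (cfgA n) (cfgT n) := by
  apply sstep_single P _ _ 0 true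
  · simp [cfgA]
  · exact (viewA0 n P hn true).mpr hA
  · intro j
    have h1 : (j - 1 = 0) ↔ (j = 1) := ⟨fun h => by linear_combination h, fun h => by linear_combination h⟩
    by_cases h0 : j = 0
    · subst h0
      simp [cfgA, cfgT, f01 n hn, h1, (fm0 n hn)]
    · by_cases hj1 : j = 1
      · subst hj1; simp [cfgA, cfgT, f10 n hn, h1]
      · simp [cfgA, cfgT, h0, hj1, h1]

/-- Step cfgT → cfgA : one robot of the tower at 1 moves left to 0. -/
lemma TR.stepTA (hn : 2 < n) (h : P.moves 0 2 0 false) : SStep P (cfgT n) (cfgA n) := by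
  apply sstep_single P _ _ 1 false
  · simp [cfgT]
  · exact (viewT1 n P hn false).mpr h
  · intro j
    have h1 : (j + 1 = 1) ↔ (j = 0) := ⟨fun h => by linear_combination h, fun h => by linear_combination h⟩
    by_cases h0 : j = 0
    · subst h0; simp [cfgA, cfgT, f01 n hn, h1]
    · by_cases hj1 : j = 1
      · subst hj1; simp [cfgA, cfgT, f10 n hn, h1]
      · simp [cfgA, cfgT, h0, hj1, h1]

/-- Step cfgA → cfgS : robot at 1 moves right to 2. -/
lemma TR.stepAS (hn : 2 < n) (hB : P.moves 0 1 1 false) : SStep P (cfgA n) (cfgS n) := by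
  apply sstep_single P _ _ 1 true
  · simp [cfgA]
  · exact (viewA1 n P hn true).mpr ((P.rev 0 1 1 false).mp hB)
  · intro j
    have h1 : (j - 1 = 1) ↔ (j = 2) := ⟨fun h => by linear_combination h, fun h => by linear_combination h⟩
    by_cases h0 : j = 0
    · subst h0; simp [cfgA, cfgS, f01 n hn, h1, (f20 n hn).symm, fm1 n hn]
    · by_cases hj1 : j = 1
      · subst hj1; simp [cfgA, cfgS, f10 n hn, (f21 n hn).symm, h1, f01 n hn]
      · by_cases hj2 : j = 2
        · subst hj2; simp [cfgA, cfgS, f20 n hn, f21 n hn, h1]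
        · simp [cfgA, cfgS, h0, hj1, hj2, h1]

/-- Step cfgS → cfgA : robot at 2 moves left to 1 (view taken as-is). -/
lemma TR.stepSA (hn : 2 < n) (h : P.moves (cfgS n (2 - 1)) (cfgS n 2) (cfgS n (2 + 1)) false) :
    SStep P (cfgS n) (cfgA n) := by
  apply sstep_single P _ _ 2 false
  · simp [cfgS]
  · exact h
  · intro j
    have h1 : (j + 1 = 2) ↔ (j = 1) := ⟨fun h => by linear_combination h, fun h => by linear_combination h⟩
    by_cases h0 : j = 0
    · subst h0; simp [cfgA, cfgS, f01 n hn, (f20 n hn).symm, h1, (f21 n hn).symm]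
    · by_cases hj1 : j = 1
      · subst hj1; simp [cfgA, cfgS, f10 n hn, (f21 n hn).symm, h1]
      · by_cases hj2 : j = 2
        · subst hj2; simp [cfgA, cfgS, f20 n hn, f21 n hn, h1]
        · simp [cfgA, cfgS, h0, hj1, hj2, h1]

end TRsteps

section TRterm
variable (n : ℕ) [NeZero n] (P : Protocol1)
open TR

lemma TR.viewS0 (hn : 2 < n) (hn4 : 3 < n) (d : Bool) :
    P.moves (cfgS n (0 - 1)) (cfgS n 0) (cfgS n (0 + 1)) d ↔ P.moves 0 1 0 d := by
  rw [show (0:ZMod n) - 1 = -1 by ring, show (0:ZMod n) + 1 = 1 by ring,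
    show cfgS n (-1) = 0 by simp [cfgS, fm0 n hn, fm2 n hn4],
    show cfgS n 0 = 1 by simp [cfgS], show cfgS n 1 = 0 by simp [cfgS, f10 n hn, (f21 n hn).symm]]

lemma TR.viewS2 (hn : 2 < n) (hn4 : 3 < n) (d : Bool) :
    P.moves (cfgS n (2 - 1)) (cfgS n 2) (cfgS n (2 + 1)) d ↔ P.moves 0 1 0 d := by
  rw [show (2:ZMod n) - 1 = 1 by ring, show (2:ZMod n) + 1 = 3 by ring,
    show cfgS n 1 = 0 by simp [cfgS, f10 n hn, (f21 n hn).symm],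
    show cfgS n 2 = 1 by simp [cfgS], show cfgS n 3 = 0 by simp [cfgS, f30 n hn4, f32 n hn]]

lemma TR.occA (j : ZMod n) (hpos : 0 < cfgA n j) : j = 0 ∨ j = 1 := by
  by_contra h; push_neg at h; simp [cfgA, h.1, h.2] at hpos

lemma TR.termA (hn : 2 < n) (hA : ¬ P.moves 0 1 1 true) (hB : ¬ P.moves 0 1 1 false) :
    Terminal1 P (cfgA n) := by
  rintro j ⟨hpos, d, hd⟩
  rcases occA n j hpos with rfl | rfl
  · have := (viewA0 n P hn d).mp hd
    cases d
    · exact hB this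
    · exact hA this
  · have := (P.rev 1 1 0 d).mp ((viewA1 n P hn d).mp hd)
    cases d
    · exact hA this
    · exact hB this

lemma TR.termT (hn : 2 < n) (h : ∀ d, ¬ P.moves 0 2 0 d) : Terminal1 P (cfgT n) := by
  rintro j ⟨hpos, d, hd⟩
  have hj : j = 1 := by by_contra hj; simp [cfgT, hj] at hpos
  subst hj
  exact h d ((viewT1 n P hn d).mp hd)

lemma TR.termS (hn : 2 < n) (hn4 : 3 < n)
    (h : ¬ P.moves (cfgS n (2 - 1)) (cfgS n 2) (cfgS n (2 + 1)) false) :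
    Terminal1 P (cfgS n) := by
  have hni : ¬ P.moves 0 1 0 false := fun hm => h ((viewS2 n P hn hn4 false).mpr hm)
  have hni' : ¬ P.moves 0 1 0 true := fun hm => hni ((P.rev 0 1 0 true).mp hm)
  rintro j ⟨hpos, d, hd⟩
  have hj : j = 0 ∨ j = 2 := by
    by_contra hj; push_neg at hj; simp [cfgS, hj.1, hj.2] at hpos
  rcases hj with rfl | rfl
  · have := (viewS0 n P hn hn4 d).mp hd
    cases d
    · exact hni this
    · exact hni' this
  · have := (viewS2 n P hn hn4 d).mp hd
    cases d
    · exact hni this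
    · exact hni' this

lemma TR.enA0 (hn : 2 < n) (d : Bool) (h : P.moves 0 1 1 d) : enabled P (cfgA n) 0 :=
  ⟨by simp [cfgA], d, (viewA0 n P hn d).mpr h⟩

lemma TR.enT1 (hn : 2 < n) (d : Bool) (h : P.moves 0 2 0 d) : enabled P (cfgT n) 1 :=
  ⟨by simp [cfgT], d, (viewT1 n P hn d).mpr h⟩

end TRterm


/-- With `k = 2` robots and visibility `φ = 1` on a ring of `n > 2` nodes,
no semi-synchronous deterministic protocol solves terminating exploration starting from the
towerless configuration in which the two robots occupy adjacent nodes: every protocol admits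
an execution which either never terminates (each move giving a configuration
indistinguishable from a previously visited one) or terminates without all nodes explored. -/
theorem two_robots_cannot_explore (n : ℕ) [NeZero n] (hn : 2 < n) (P : Protocol1) :
    ¬ (∀ e : ℕ → (ZMod n → ℕ),
        e 0 = (fun j => if j = 0 ∨ j = 1 then 1 else 0) →
        (∀ t, SStep P (e t) (e (t + 1)) ∨ (Terminal1 P (e t) ∧ e (t + 1) = e t)) →
        (∃ N, Terminal1 P (e N)) ∧ (∀ u : ZMod n, ∃ t, 0 < e t u)) := by
  intro H
  by_cases hA : P.moves 0 1 1 true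
  · by_cases hT : ∃ d, P.moves 0 2 0 d
    · -- tower rule exists: loop TR.cfgA → TR.cfgT → TR.cfgA → ⋯, never terminal
      obtain ⟨d0, hd0⟩ := hT
      have hTf : P.moves 0 2 0 false := by
        cases d0
        · exact hd0
        · exact (P.rev 0 2 0 true).mp hd0
      obtain ⟨⟨N, hN⟩, -⟩ :=
        H (fun t => if Even t then TR.cfgA n else TR.cfgT n)
          (by funext j; simp [TR.cfgA])
          (by
            intro t; left
            by_cases ht : Even t
            · have ht' : ¬ Even (t + 1) := by simp [Nat.even_add_one, ht]
              simp only [ht, ht', if_pos, if_neg, if_true, if_false]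
              exact TR.stepAT n P hn hA
            · have ht' : Even (t + 1) := Nat.even_add_one.mpr ht
              simp only [ht, ht', if_pos, if_neg, if_true, if_false]
              exact TR.stepTA n P hn hTf)
      by_cases hNe : Even N
      · simp only [hNe, if_true] at hN
        exact hN 0 (TR.enA0 n P hn true hA)
      · simp only [hNe, if_false] at hN
        exact hN 1 (TR.enT1 n P hn false hTf)
    · -- no tower rule: TR.cfgA → TR.cfgT, then stuck with node 2 unexplored
      push_neg at hT
      obtain ⟨-, hexp⟩ :=
        H (fun t => if t = 0 then TR.cfgA n else TR.cfgT n)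
          (by funext j; simp [TR.cfgA])
          (by
            intro t
            match t with
            | 0 =>
              left
              simp only [if_pos rfl, Nat.succ_ne_zero, if_neg, if_false]
              exact TR.stepAT n P hn hA
            | (k + 1) =>
              right
              simp only [Nat.succ_ne_zero, if_neg, if_false]
              exact ⟨TR.termT n P hn hT, trivial⟩)
      obtain ⟨t, ht⟩ := hexp 2
      match t with
      | 0 => simp [TR.cfgA, TR.f20 n hn, TR.f21 n hn] at ht
      | (k + 1) => simp [TR.cfgT, TR.f21 n hn] at ht
  · by_cases hB : P.moves 0 1 1 false
    · by_cases hback : P.moves (TR.cfgS n (2 - 1)) (TR.cfgS n 2) (TR.cfgS n (2 + 1)) false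
      · -- loop TR.cfgA → TR.cfgS → TR.cfgA → ⋯, never terminal
        obtain ⟨⟨N, hN⟩, -⟩ :=
          H (fun t => if Even t then TR.cfgA n else TR.cfgS n)
            (by funext j; simp [TR.cfgA])
            (by
              intro t; left
              by_cases ht : Even t
              · have ht' : ¬ Even (t + 1) := by simp [Nat.even_add_one, ht]
                simp only [ht, ht', if_pos, if_neg, if_true, if_false]
                exact TR.stepAS n P hn hB
              · have ht' : Even (t + 1) := Nat.even_add_one.mpr ht
                simp only [ht, ht', if_pos, if_neg, if_true, if_false]
                exact TR.stepSA n P hn hback)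
        by_cases hNe : Even N
        · simp only [hNe, if_true] at hN
          exact hN 0 (TR.enA0 n P hn false hB)
        · simp only [hNe, if_false] at hN
          exact hN 2 ⟨by simp [TR.cfgS], false, hback⟩
      · -- robot must separate, then stuck; node 3 unexplored (n ≥ 4 here)
        have hn4 : 3 < n := by
          by_contra hle
          have h3 : n = 3 := by omega
          subst h3
          apply hback
          rw [show ((2 : ZMod 3) - 1) = 1 from by decide,
            show ((2 : ZMod 3) + 1) = 0 from by decide,
            show TR.cfgS 3 1 = 0 from by decide,
            show TR.cfgS 3 2 = 1 from by decide,
            show TR.cfgS 3 0 = 1 from by decide]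
          exact hB
        obtain ⟨-, hexp⟩ :=
          H (fun t => if t = 0 then TR.cfgA n else TR.cfgS n)
            (by funext j; simp [TR.cfgA])
            (by
              intro t
              match t with
              | 0 =>
                left
                simp only [if_pos rfl, Nat.succ_ne_zero, if_neg, if_false]
                exact TR.stepAS n P hn hB
              | (k + 1) =>
                right
                simp only [Nat.succ_ne_zero, if_neg, if_false]
                exact ⟨TR.termS n P hn hn4 hback, trivial⟩)
        obtain ⟨t, ht⟩ := hexp 3
        match t with
        | 0 => simp [TR.cfgA, TR.f30 n hn4, TR.f31 n hn] at ht
        | (k + 1) => simp [TR.cfgS, TR.f30 n hn4, TR.f32 n hn] at ht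
    · -- initial configuration already terminal, node 2 unexplored
      obtain ⟨-, hexp⟩ :=
        H (fun _ => TR.cfgA n) (by funext j; simp [TR.cfgA])
          (fun t => Or.inr ⟨TR.termA n P hn hA hB, rfl⟩)
      obtain ⟨t, ht⟩ := hexp 2
      simp [TR.cfgA, TR.f20 n hn, TR.f21 n hn] at ht
end

section
/- In the fully synchronous model with visibility φ = 1, the two-rule algorithm (1A'1: border robot 0(1)1 moves toward its empty neighbor; 1A'2: isolated robot 0(1)0 moves to a chosen neighbor) started from a single 1.block of n − 1 robots on a ring of n nodes with 3 ≤ n ≤ 5 terminates in at most 2 rounds with every node visited, the terminal configuration containing a 2-tower with every robot either in the 2-tower or adjacent to it. -/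
/-- The oriented rules of the small-ring algorithm: 1A'1 `0(1)1 ← ` (border robot moves
toward its empty neighbor, the `a`-side, i.e. `false`); 1A'2 `0(1)0` (isolated robot moves
to a neighbor chosen by the adversary). -/
def A1'base (a b c : ℕ) (d : Bool) : Prop :=
  (a = 0 ∧ b = 1 ∧ c = 1 ∧ d = false) ∨
  (a = 0 ∧ b = 1 ∧ c = 0)

/-- The two-rule algorithm, closed under reversal of the (unoriented) view. -/
def A1' : Protocol1 where
  moves a b c d := A1'base a b c d ∨ A1'base c b a (!d)
  rev := by
    intro a b c d
    constructor
    · rintro (h | h)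
      · right; simpa [Bool.not_not] using h
      · left; exact h
    · rintro (h | h)
      · right; simpa using h
      · left; simpa [Bool.not_not] using h

instance A1'.decBase (a b c : ℕ) (d : Bool) : Decidable (A1'base a b c d) := by
  unfold A1'base; infer_instance

instance A1'.decMoves (a b c : ℕ) (d : Bool) : Decidable (A1'.moves a b c d) :=
  inferInstanceAs (Decidable (A1'base a b c d ∨ A1'base c b a (!d)))

instance decEnabled {n : ℕ} (γ : ZMod n → ℕ) (j : ZMod n) : Decidable (enabled A1' γ j) := by
  unfold enabled; infer_instance

instance decTerminal {n : ℕ} [NeZero n] (γ : ZMod n → ℕ) : Decidable (Terminal1 A1' γ) := by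
  unfold Terminal1; infer_instance

example : ¬ Terminal1 A1' (fun j : ZMod 3 => if j.val < 2 then 1 else 0) := by decide
example : Terminal1 A1' (fun j : ZMod 3 => if j = 2 then 2 else 0) := by decide
example : enabled A1' (fun j : ZMod 3 => if j.val < 2 then 1 else 0) 0 := by decide

set_option maxHeartbeats 1000000 in
theorem case3 (e : ℕ → (ZMod 3 → ℕ))
    (h0 : e 0 = fun j : ZMod 3 => if j.val < 3 - 1 then 1 else 0)
    (hstep : ∀ t, (¬ Terminal1 A1' (e t) → FStep A1' (e t) (e (t + 1))) ∧
                  (Terminal1 A1' (e t) → e (t + 1) = e t)) :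
    ∃ T ≤ 2, Terminal1 A1' (e T) ∧
      (∀ u : ZMod 3, ∃ t ≤ T, 0 < e t u) ∧
      (∃ u : ZMod 3, e T u = 2 ∧
        ∀ j : ZMod 3, 0 < e T j → (j = u ∨ j = u + 1 ∨ j = u - 1)) := by
  obtain ⟨L, R, hLR, hL, hR, hδ⟩ := (hstep 0).1 (by rw [h0]; decide)
  have z2 : L 2 + R 2 = 0 := (hLR 2).2 (by rw [h0]; decide)
  have s0 : L 0 + R 0 = e 0 0 := (hLR 0).1 (by rw [h0]; decide)
  have s1 : L 1 + R 1 = e 0 1 := (hLR 1).1 (by rw [h0]; decide)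
  have R0 : R 0 = 0 := by
    by_contra hc
    exact absurd (hR 0 (Nat.pos_of_ne_zero hc)) (by rw [h0]; decide)
  have L1 : L 1 = 0 := by
    by_contra hc
    exact absurd (hL 1 (Nat.pos_of_ne_zero hc)) (by rw [h0]; decide)
  have g0 : e 0 0 = 1 := by rw [h0]; decide
  have g1 : e 0 1 = 1 := by rw [h0]; decide
  have g2 : e 0 2 = 0 := by rw [h0]; decide
  have v0 : e 1 0 = 0 := by
    have h := hδ 0
    rw [show (0:ℕ)+1 = 1 from rfl, show (0:ZMod 3)+1 = 1 from by decide,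
      show (0:ZMod 3)-1 = 2 from by decide] at h
    omega
  have v1 : e 1 1 = 0 := by
    have h := hδ 1
    rw [show (0:ℕ)+1 = 1 from rfl, show (1:ZMod 3)+1 = 2 from by decide,
      show (1:ZMod 3)-1 = 0 from by decide] at h
    omega
  have v2 : e 1 2 = 2 := by
    have h := hδ 2
    rw [show (0:ℕ)+1 = 1 from rfl, show (2:ZMod 3)+1 = 0 from by decide,
      show (2:ZMod 3)-1 = 1 from by decide] at h
    omega
  have he1 : e 1 = fun j : ZMod 3 => if j = 2 then 2 else 0 := by
    funext j; fin_cases j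
    · exact v0
    · exact v1
    · exact v2
  refine ⟨1, by norm_num, by rw [he1]; decide, ?_, 2, by rw [he1]; decide, by rw [he1]; decide⟩
  intro u
  fin_cases u
  · exact ⟨0, by norm_num, by rw [h0]; decide⟩
  · exact ⟨0, by norm_num, by rw [h0]; decide⟩
  · exact ⟨1, by norm_num, by rw [he1]; decide⟩

set_option maxHeartbeats 1000000 in
theorem case4 (e : ℕ → (ZMod 4 → ℕ))
    (h0 : e 0 = fun j : ZMod 4 => if j.val < 4 - 1 then 1 else 0)
    (hstep : ∀ t, (¬ Terminal1 A1' (e t) → FStep A1' (e t) (e (t + 1))) ∧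
                  (Terminal1 A1' (e t) → e (t + 1) = e t)) :
    ∃ T ≤ 2, Terminal1 A1' (e T) ∧
      (∀ u : ZMod 4, ∃ t ≤ T, 0 < e t u) ∧
      (∃ u : ZMod 4, e T u = 2 ∧
        ∀ j : ZMod 4, 0 < e T j → (j = u ∨ j = u + 1 ∨ j = u - 1)) := by
  obtain ⟨L, R, hLR, hL, hR, hδ⟩ := (hstep 0).1 (by rw [h0]; decide)
  have z1 : L 1 + R 1 = 0 := (hLR 1).2 (by rw [h0]; decide)
  have z3 : L 3 + R 3 = 0 := (hLR 3).2 (by rw [h0]; decide)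
  have s0 : L 0 + R 0 = e 0 0 := (hLR 0).1 (by rw [h0]; decide)
  have s2 : L 2 + R 2 = e 0 2 := (hLR 2).1 (by rw [h0]; decide)
  have R0 : R 0 = 0 := by
    by_contra hc
    exact absurd (hR 0 (Nat.pos_of_ne_zero hc)) (by rw [h0]; decide)
  have L2 : L 2 = 0 := by
    by_contra hc
    exact absurd (hL 2 (Nat.pos_of_ne_zero hc)) (by rw [h0]; decide)
  have g0 : e 0 0 = 1 := by rw [h0]; decide
  have g1 : e 0 1 = 1 := by rw [h0]; decide
  have g2 : e 0 2 = 1 := by rw [h0]; decide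
  have g3 : e 0 3 = 0 := by rw [h0]; decide
  have v0 : e 1 0 = 0 := by
    have h := hδ 0
    rw [show (0:ℕ)+1 = 1 from rfl, show (0:ZMod 4)+1 = 1 from by decide,
      show (0:ZMod 4)-1 = 3 from by decide] at h
    omega
  have v1 : e 1 1 = 1 := by
    have h := hδ 1
    rw [show (0:ℕ)+1 = 1 from rfl, show (1:ZMod 4)+1 = 2 from by decide,
      show (1:ZMod 4)-1 = 0 from by decide] at h
    omega
  have v2 : e 1 2 = 0 := by
    have h := hδ 2
    rw [show (0:ℕ)+1 = 1 from rfl, show (2:ZMod 4)+1 = 3 from by decide,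
      show (2:ZMod 4)-1 = 1 from by decide] at h
    omega
  have v3 : e 1 3 = 2 := by
    have h := hδ 3
    rw [show (0:ℕ)+1 = 1 from rfl, show (3:ZMod 4)+1 = 0 from by decide,
      show (3:ZMod 4)-1 = 2 from by decide] at h
    omega
  have he1 : e 1 = fun j : ZMod 4 => if j = 1 then 1 else if j = 3 then 2 else 0 := by
    funext j; fin_cases j
    · exact v0
    · exact v1
    · exact v2
    · exact v3
  clear z1 z3 s0 s2 R0 L2 hδ hLR hL hR v0 v1 v2 v3
  obtain ⟨L, R, hLR, hL, hR, hδ⟩ := (hstep 1).1 (by rw [he1]; decide)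
  have z0 : L 0 + R 0 = 0 := (hLR 0).2 (by rw [he1]; decide)
  have z2 : L 2 + R 2 = 0 := (hLR 2).2 (by rw [he1]; decide)
  have z3 : L 3 + R 3 = 0 := (hLR 3).2 (by rw [he1]; decide)
  have s1 : L 1 + R 1 = e 1 1 := (hLR 1).1 (by rw [he1]; decide)
  have g0 : e 1 0 = 0 := by rw [he1]; decide
  have g1 : e 1 1 = 1 := by rw [he1]; decide
  have g2 : e 1 2 = 0 := by rw [he1]; decide
  have g3 : e 1 3 = 2 := by rw [he1]; decide
  have v0 : e 2 0 = L 1 := by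
    have h := hδ 0
    rw [show (1:ℕ)+1 = 2 from rfl, show (0:ZMod 4)+1 = 1 from by decide,
      show (0:ZMod 4)-1 = 3 from by decide] at h
    omega
  have v1 : e 2 1 = 0 := by
    have h := hδ 1
    rw [show (1:ℕ)+1 = 2 from rfl, show (1:ZMod 4)+1 = 2 from by decide,
      show (1:ZMod 4)-1 = 0 from by decide] at h
    omega
  have v2 : e 2 2 = R 1 := by
    have h := hδ 2
    rw [show (1:ℕ)+1 = 2 from rfl, show (2:ZMod 4)+1 = 3 from by decide,
      show (2:ZMod 4)-1 = 1 from by decide] at h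
    omega
  have v3 : e 2 3 = 2 := by
    have h := hδ 3
    rw [show (1:ℕ)+1 = 2 from rfl, show (3:ZMod 4)+1 = 0 from by decide,
      show (3:ZMod 4)-1 = 2 from by decide] at h
    omega
  have hcov : ∀ u : ZMod 4, ∃ t ≤ 2, 0 < e t u := by
    intro u
    fin_cases u
    · exact ⟨0, by norm_num, by rw [h0]; decide⟩
    · exact ⟨0, by norm_num, by rw [h0]; decide⟩
    · exact ⟨0, by norm_num, by rw [h0]; decide⟩
    · exact ⟨1, by norm_num, by rw [he1]; decide⟩
  have hcase : L 1 = 1 ∨ R 1 = 1 := by omega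
  rcases hcase with hc | hc
  · have he2 : e 2 = fun j : ZMod 4 => if j = 0 then 1 else if j = 3 then 2 else 0 := by
      funext j; fin_cases j
      · exact v0.trans hc
      · exact v1
      · exact v2.trans (show R 1 = 0 by omega)
      · exact v3
    exact ⟨2, by norm_num, by rw [he2]; decide, hcov, 3, by rw [he2]; decide,
      by rw [he2]; decide⟩
  · have he2 : e 2 = fun j : ZMod 4 => if j = 2 then 1 else if j = 3 then 2 else 0 := by
      funext j; fin_cases j
      · exact v0.trans (show L 1 = 0 by omega)
      · exact v1
      · exact v2.trans hc
      · exact v3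
    exact ⟨2, by norm_num, by rw [he2]; decide, hcov, 3, by rw [he2]; decide,
      by rw [he2]; decide⟩

set_option maxHeartbeats 1000000 in
theorem case5 (e : ℕ → (ZMod 5 → ℕ))
    (h0 : e 0 = fun j : ZMod 5 => if j.val < 5 - 1 then 1 else 0)
    (hstep : ∀ t, (¬ Terminal1 A1' (e t) → FStep A1' (e t) (e (t + 1))) ∧
                  (Terminal1 A1' (e t) → e (t + 1) = e t)) :
    ∃ T ≤ 2, Terminal1 A1' (e T) ∧
      (∀ u : ZMod 5, ∃ t ≤ T, 0 < e t u) ∧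
      (∃ u : ZMod 5, e T u = 2 ∧
        ∀ j : ZMod 5, 0 < e T j → (j = u ∨ j = u + 1 ∨ j = u - 1)) := by
  obtain ⟨L, R, hLR, hL, hR, hδ⟩ := (hstep 0).1 (by rw [h0]; decide)
  have z1 : L 1 + R 1 = 0 := (hLR 1).2 (by rw [h0]; decide)
  have z2 : L 2 + R 2 = 0 := (hLR 2).2 (by rw [h0]; decide)
  have z4 : L 4 + R 4 = 0 := (hLR 4).2 (by rw [h0]; decide)
  have s0 : L 0 + R 0 = e 0 0 := (hLR 0).1 (by rw [h0]; decide)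
  have s3 : L 3 + R 3 = e 0 3 := (hLR 3).1 (by rw [h0]; decide)
  have R0 : R 0 = 0 := by
    by_contra hc
    exact absurd (hR 0 (Nat.pos_of_ne_zero hc)) (by rw [h0]; decide)
  have L3 : L 3 = 0 := by
    by_contra hc
    exact absurd (hL 3 (Nat.pos_of_ne_zero hc)) (by rw [h0]; decide)
  have g0 : e 0 0 = 1 := by rw [h0]; decide
  have g1 : e 0 1 = 1 := by rw [h0]; decide
  have g2 : e 0 2 = 1 := by rw [h0]; decide
  have g3 : e 0 3 = 1 := by rw [h0]; decide
  have g4 : e 0 4 = 0 := by rw [h0]; decide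
  have v0 : e 1 0 = 0 := by
    have h := hδ 0
    rw [show (0:ℕ)+1 = 1 from rfl, show (0:ZMod 5)+1 = 1 from by decide,
      show (0:ZMod 5)-1 = 4 from by decide] at h
    omega
  have v1 : e 1 1 = 1 := by
    have h := hδ 1
    rw [show (0:ℕ)+1 = 1 from rfl, show (1:ZMod 5)+1 = 2 from by decide,
      show (1:ZMod 5)-1 = 0 from by decide] at h
    omega
  have v2 : e 1 2 = 1 := by
    have h := hδ 2
    rw [show (0:ℕ)+1 = 1 from rfl, show (2:ZMod 5)+1 = 3 from by decide,
      show (2:ZMod 5)-1 = 1 from by decide] at h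
    omega
  have v3 : e 1 3 = 0 := by
    have h := hδ 3
    rw [show (0:ℕ)+1 = 1 from rfl, show (3:ZMod 5)+1 = 4 from by decide,
      show (3:ZMod 5)-1 = 2 from by decide] at h
    omega
  have v4 : e 1 4 = 2 := by
    have h := hδ 4
    rw [show (0:ℕ)+1 = 1 from rfl, show (4:ZMod 5)+1 = 0 from by decide,
      show (4:ZMod 5)-1 = 3 from by decide] at h
    omega
  have he1 : e 1 = fun j : ZMod 5 =>
      if j = 1 then 1 else if j = 2 then 1 else if j = 4 then 2 else 0 := by
    funext j; fin_cases j
    · exact v0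
    · exact v1
    · exact v2
    · exact v3
    · exact v4
  clear z1 z2 z4 s0 s3 R0 L3 hδ hLR hL hR v0 v1 v2 v3 v4
  obtain ⟨L, R, hLR, hL, hR, hδ⟩ := (hstep 1).1 (by rw [he1]; decide)
  have z0 : L 0 + R 0 = 0 := (hLR 0).2 (by rw [he1]; decide)
  have z3 : L 3 + R 3 = 0 := (hLR 3).2 (by rw [he1]; decide)
  have z4 : L 4 + R 4 = 0 := (hLR 4).2 (by rw [he1]; decide)
  have s1 : L 1 + R 1 = e 1 1 := (hLR 1).1 (by rw [he1]; decide)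
  have s2 : L 2 + R 2 = e 1 2 := (hLR 2).1 (by rw [he1]; decide)
  have R1 : R 1 = 0 := by
    by_contra hc
    exact absurd (hR 1 (Nat.pos_of_ne_zero hc)) (by rw [he1]; decide)
  have L2 : L 2 = 0 := by
    by_contra hc
    exact absurd (hL 2 (Nat.pos_of_ne_zero hc)) (by rw [he1]; decide)
  have g0 : e 1 0 = 0 := by rw [he1]; decide
  have g1 : e 1 1 = 1 := by rw [he1]; decide
  have g2 : e 1 2 = 1 := by rw [he1]; decide
  have g3 : e 1 3 = 0 := by rw [he1]; decide
  have g4 : e 1 4 = 2 := by rw [he1]; decide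
  have v0 : e 2 0 = 1 := by
    have h := hδ 0
    rw [show (1:ℕ)+1 = 2 from rfl, show (0:ZMod 5)+1 = 1 from by decide,
      show (0:ZMod 5)-1 = 4 from by decide] at h
    omega
  have v1 : e 2 1 = 0 := by
    have h := hδ 1
    rw [show (1:ℕ)+1 = 2 from rfl, show (1:ZMod 5)+1 = 2 from by decide,
      show (1:ZMod 5)-1 = 0 from by decide] at h
    omega
  have v2 : e 2 2 = 0 := by
    have h := hδ 2
    rw [show (1:ℕ)+1 = 2 from rfl, show (2:ZMod 5)+1 = 3 from by decide,
      show (2:ZMod 5)-1 = 1 from by decide] at h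
    omega
  have v3 : e 2 3 = 1 := by
    have h := hδ 3
    rw [show (1:ℕ)+1 = 2 from rfl, show (3:ZMod 5)+1 = 4 from by decide,
      show (3:ZMod 5)-1 = 2 from by decide] at h
    omega
  have v4 : e 2 4 = 2 := by
    have h := hδ 4
    rw [show (1:ℕ)+1 = 2 from rfl, show (4:ZMod 5)+1 = 0 from by decide,
      show (4:ZMod 5)-1 = 3 from by decide] at h
    omega
  have he2 : e 2 = fun j : ZMod 5 =>
      if j = 0 then 1 else if j = 3 then 1 else if j = 4 then 2 else 0 := by
    funext j; fin_cases j
    · exact v0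
    · exact v1
    · exact v2
    · exact v3
    · exact v4
  refine ⟨2, by norm_num, by rw [he2]; decide, ?_, 4, by rw [he2]; decide, by rw [he2]; decide⟩
  intro u
  fin_cases u
  · exact ⟨0, by norm_num, by rw [h0]; decide⟩
  · exact ⟨0, by norm_num, by rw [h0]; decide⟩
  · exact ⟨0, by norm_num, by rw [h0]; decide⟩
  · exact ⟨0, by norm_num, by rw [h0]; decide⟩
  · exact ⟨1, by norm_num, by rw [he1]; decide⟩

/-- In the fully synchronous model with visibility `φ = 1`, the two-rule
algorithm started from a single 1.block of `n - 1` robots on a ring of `n` nodes,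
`3 ≤ n ≤ 5`, terminates in at most 2 rounds with every node visited, the terminal
configuration containing a 2-tower with every robot either in the 2-tower or on a node
adjacent to it. -/
theorem small_ring_algorithm_explores (n : ℕ) [NeZero n] (hn3 : 3 ≤ n) (hn5 : n ≤ 5)
    (e : ℕ → (ZMod n → ℕ))
    (h0 : e 0 = fun j : ZMod n => if j.val < n - 1 then 1 else 0)
    (hstep : ∀ t, (¬ Terminal1 A1' (e t) → FStep A1' (e t) (e (t + 1))) ∧
                  (Terminal1 A1' (e t) → e (t + 1) = e t)) :
    ∃ T ≤ 2, Terminal1 A1' (e T) ∧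
      (∀ u : ZMod n, ∃ t ≤ T, 0 < e t u) ∧
      (∃ u : ZMod n, e T u = 2 ∧
        ∀ j : ZMod n, 0 < e T j → (j = u ∨ j = u + 1 ∨ j = u - 1)) := by
  interval_cases n
  · exact case3 e h0 hstep
  · exact case4 e h0 hstep
  · exact case5 e h0 hstep
end

section
/- With visibility φ = 3 on a ring of n > 13 nodes, consider the 'Locked' configuration: 4 robots at nodes u_i, u_{i+3}, u_{i+6}, u_{i+9} (inter-distance 3). If the protocol includes the rule 000(1)001 :: move away from the robot at distance 3 (Rule 3R1), then the adversary, activating border robots one at a time, can in 3 steps reach a configuration indistinguishable (rotation/mirror) from an earlier one in the execution. -/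
/-- Indicator configuration of four robots on the given nodes. -/
def four {n : ℕ} (a b c e : ZMod n) : ZMod n → ℕ :=
  fun j => if j = a ∨ j = b ∨ j = c ∨ j = e then 1 else 0


lemma nzk (n : ℕ) (hn : 13 < n) (k : ℕ) (hk : 0 < k) (hk13 : k ≤ 13) : (k : ZMod n) ≠ 0 := by
  rw [Ne, ZMod.natCast_eq_zero_iff]
  intro h
  have := Nat.le_of_dvd hk h
  omega

lemma four_zero {n : ℕ} {a b c e j : ZMod n} (h1 : j ≠ a) (h2 : j ≠ b) (h3 : j ≠ c)
    (h4 : j ≠ e) : four a b c e j = 0 := by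
  simp [four, h1, h2, h3, h4]

lemma four_one {n : ℕ} {a b c e j : ZMod n} (h : j = a ∨ j = b ∨ j = c ∨ j = e) :
    four a b c e j = 1 := by
  simp [four, h]

/-- With visibility `φ = 3` on a ring of `n > 13` nodes, start from the
`Locked` configuration (robots at `i, i+3, i+6, i+9`). If the protocol includes Rule 3R1
(view `000(1)001`, up to reversal, move away from the robot at distance 3), the adversary
can activate border robots one at a time: robot at `i` moves to `i-1` (giving `γ₁`), then
the robot at `i+3` — whose view in `γ₁` is `0,0,0,(1),0,0,1`, so Rule 3R1 applies — moves
to `i+2` (giving `γ₂`), then the robot at `i+6` — whose view in `γ₂` is again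
`0,0,0,(1),0,0,1` — moves to `i+5` (giving `γ₃`). The configuration `γ₃` is
indistinguishable (rotation/mirror) from the earlier configuration `γ₁`. -/
theorem rule3R1_revisit (n : ℕ) [NeZero n] (hn : 13 < n) (i : ZMod n) :
    -- view of the robot at `i` in the Locked configuration matches Rule 3R1
    (∀ m : ℕ, 1 ≤ m → m ≤ 3 → four i (i+3) (i+6) (i+9) (i - m) = 0) ∧
    (four i (i+3) (i+6) (i+9) (i+1) = 0 ∧ four i (i+3) (i+6) (i+9) (i+2) = 0 ∧
      four i (i+3) (i+6) (i+9) (i+3) = 1) ∧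
    -- view of the robot at `i+3` in `γ₁` matches Rule 3R1
    (four (i-1) (i+3) (i+6) (i+9) i = 0 ∧ four (i-1) (i+3) (i+6) (i+9) (i+1) = 0 ∧
      four (i-1) (i+3) (i+6) (i+9) (i+2) = 0 ∧ four (i-1) (i+3) (i+6) (i+9) (i+3) = 1 ∧
      four (i-1) (i+3) (i+6) (i+9) (i+4) = 0 ∧ four (i-1) (i+3) (i+6) (i+9) (i+5) = 0 ∧
      four (i-1) (i+3) (i+6) (i+9) (i+6) = 1) ∧
    -- view of the robot at `i+6` in `γ₂` matches Rule 3R1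
    (four (i-1) (i+2) (i+6) (i+9) (i+3) = 0 ∧ four (i-1) (i+2) (i+6) (i+9) (i+4) = 0 ∧
      four (i-1) (i+2) (i+6) (i+9) (i+5) = 0 ∧ four (i-1) (i+2) (i+6) (i+9) (i+6) = 1 ∧
      four (i-1) (i+2) (i+6) (i+9) (i+7) = 0 ∧ four (i-1) (i+2) (i+6) (i+9) (i+8) = 0 ∧
      four (i-1) (i+2) (i+6) (i+9) (i+9) = 1) ∧
    -- `γ₃` is indistinguishable from the earlier configuration `γ₁`
    Indist (four (i-1) (i+3) (i+6) (i+9)) (four (i-1) (i+2) (i+5) (i+9)) := by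
  have nz : ∀ k : ℕ, 0 < k → k ≤ 13 → (k : ZMod n) ≠ 0 := nzk n hn
  refine ⟨?_, ⟨?_, ?_, ?_⟩, ⟨?_, ?_, ?_, ?_, ?_, ?_, ?_⟩, ⟨?_, ?_, ?_, ?_, ?_, ?_, ?_⟩, ?_⟩
  · intro m hm1 hm3
    refine four_zero ?_ ?_ ?_ ?_
    · exact fun h => nz m hm1 (by omega) (by linear_combination -h)
    · exact fun h => nz (m+3) (by omega) (by omega) (by push_cast; linear_combination -h)
    · exact fun h => nz (m+6) (by omega) (by omega) (by push_cast; linear_combination -h)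
    · exact fun h => nz (m+9) (by omega) (by omega) (by push_cast; linear_combination -h)
  · refine four_zero ?_ ?_ ?_ ?_
    · exact fun h => nz 1 (by omega) (by omega) (by push_cast; linear_combination h)
    · exact fun h => nz 2 (by omega) (by omega) (by push_cast; linear_combination -h)
    · exact fun h => nz 5 (by omega) (by omega) (by push_cast; linear_combination -h)
    · exact fun h => nz 8 (by omega) (by omega) (by push_cast; linear_combination -h)
  · refine four_zero ?_ ?_ ?_ ?_
    · exact fun h => nz 2 (by omega) (by omega) (by push_cast; linear_combination h)
    · exact fun h => nz 1 (by omega) (by omega) (by push_cast; linear_combination -h)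
    · exact fun h => nz 4 (by omega) (by omega) (by push_cast; linear_combination -h)
    · exact fun h => nz 7 (by omega) (by omega) (by push_cast; linear_combination -h)
  · exact four_one (Or.inr (Or.inl rfl))
  · refine four_zero ?_ ?_ ?_ ?_
    · exact fun h => nz 1 (by omega) (by omega) (by push_cast; linear_combination h)
    · exact fun h => nz 3 (by omega) (by omega) (by push_cast; linear_combination -h)
    · exact fun h => nz 6 (by omega) (by omega) (by push_cast; linear_combination -h)
    · exact fun h => nz 9 (by omega) (by omega) (by push_cast; linear_combination -h)
  · refine four_zero ?_ ?_ ?_ ?_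
    · exact fun h => nz 2 (by omega) (by omega) (by push_cast; linear_combination h)
    · exact fun h => nz 2 (by omega) (by omega) (by push_cast; linear_combination -h)
    · exact fun h => nz 5 (by omega) (by omega) (by push_cast; linear_combination -h)
    · exact fun h => nz 8 (by omega) (by omega) (by push_cast; linear_combination -h)
  · refine four_zero ?_ ?_ ?_ ?_
    · exact fun h => nz 3 (by omega) (by omega) (by push_cast; linear_combination h)
    · exact fun h => nz 1 (by omega) (by omega) (by push_cast; linear_combination -h)
    · exact fun h => nz 4 (by omega) (by omega) (by push_cast; linear_combination -h)
    · exact fun h => nz 7 (by omega) (by omega) (by push_cast; linear_combination -h)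
  · exact four_one (Or.inr (Or.inl rfl))
  · refine four_zero ?_ ?_ ?_ ?_
    · exact fun h => nz 5 (by omega) (by omega) (by push_cast; linear_combination h)
    · exact fun h => nz 1 (by omega) (by omega) (by push_cast; linear_combination h)
    · exact fun h => nz 2 (by omega) (by omega) (by push_cast; linear_combination -h)
    · exact fun h => nz 5 (by omega) (by omega) (by push_cast; linear_combination -h)
  · refine four_zero ?_ ?_ ?_ ?_
    · exact fun h => nz 6 (by omega) (by omega) (by push_cast; linear_combination h)
    · exact fun h => nz 2 (by omega) (by omega) (by push_cast; linear_combination h)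
    · exact fun h => nz 1 (by omega) (by omega) (by push_cast; linear_combination -h)
    · exact fun h => nz 4 (by omega) (by omega) (by push_cast; linear_combination -h)
  · exact four_one (Or.inr (Or.inr (Or.inl rfl)))
  · refine four_zero ?_ ?_ ?_ ?_
    · exact fun h => nz 4 (by omega) (by omega) (by push_cast; linear_combination h)
    · exact fun h => nz 1 (by omega) (by omega) (by push_cast; linear_combination h)
    · exact fun h => nz 3 (by omega) (by omega) (by push_cast; linear_combination -h)
    · exact fun h => nz 6 (by omega) (by omega) (by push_cast; linear_combination -h)
  · refine four_zero ?_ ?_ ?_ ?_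
    · exact fun h => nz 5 (by omega) (by omega) (by push_cast; linear_combination h)
    · exact fun h => nz 2 (by omega) (by omega) (by push_cast; linear_combination h)
    · exact fun h => nz 2 (by omega) (by omega) (by push_cast; linear_combination -h)
    · exact fun h => nz 5 (by omega) (by omega) (by push_cast; linear_combination -h)
  · refine four_zero ?_ ?_ ?_ ?_
    · exact fun h => nz 6 (by omega) (by omega) (by push_cast; linear_combination h)
    · exact fun h => nz 3 (by omega) (by omega) (by push_cast; linear_combination h)
    · exact fun h => nz 1 (by omega) (by omega) (by push_cast; linear_combination -h)
    · exact fun h => nz 4 (by omega) (by omega) (by push_cast; linear_combination -h)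
  · exact four_one (Or.inr (Or.inr (Or.inl rfl)))
  · refine four_zero ?_ ?_ ?_ ?_
    · exact fun h => nz 8 (by omega) (by omega) (by push_cast; linear_combination h)
    · exact fun h => nz 5 (by omega) (by omega) (by push_cast; linear_combination h)
    · exact fun h => nz 1 (by omega) (by omega) (by push_cast; linear_combination h)
    · exact fun h => nz 2 (by omega) (by omega) (by push_cast; linear_combination -h)
  · refine four_zero ?_ ?_ ?_ ?_
    · exact fun h => nz 9 (by omega) (by omega) (by push_cast; linear_combination h)
    · exact fun h => nz 6 (by omega) (by omega) (by push_cast; linear_combination h)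
    · exact fun h => nz 2 (by omega) (by omega) (by push_cast; linear_combination h)
    · exact fun h => nz 1 (by omega) (by omega) (by push_cast; linear_combination -h)
  · exact four_one (Or.inr (Or.inr (Or.inr rfl)))
  · refine ⟨-(2*i+8), Or.inr ?_⟩
    funext j
    show four (i-1) (i+2) (i+5) (i+9) j = four (i-1) (i+3) (i+6) (i+9) (-(j + -(2*i+8)))
    unfold four
    refine (if_congr ⟨fun h => ?_, fun h => ?_⟩ rfl rfl).symm
    · rcases h with h|h|h|h
      · exact Or.inr (Or.inr (Or.inr (by linear_combination -h)))
      · exact Or.inr (Or.inr (Or.inl (by linear_combination -h)))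
      · exact Or.inr (Or.inl (by linear_combination -h))
      · exact Or.inl (by linear_combination -h)
    · rcases h with h|h|h|h
      · exact Or.inr (Or.inr (Or.inr (by linear_combination -h)))
      · exact Or.inr (Or.inr (Or.inl (by linear_combination -h)))
      · exact Or.inr (Or.inl (by linear_combination -h))
      · exact Or.inl (by linear_combination -h)
end

section
/- With visibility φ = 3 on a ring of n > 13 nodes, in the Locked configuration (4 robots with inter-distance 3), if the protocol includes rule 100(1)001 :: move in either direction (Rule 3R3), then activating the two interior robots simultaneously creates a 1.block of two adjacent robots whose members see no other robots, and any subsequent simultaneous activation of these two robots (moving toward each other) yields a configuration indistinguishable from the previous one. -/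
lemma key_ne (n : ℕ) [NeZero n] (i : ZMod n) (x y : ℕ)
    (hx : x < n) (hy : y < n) (hxy : x ≠ y) : i + (x : ZMod n) ≠ i + (y : ZMod n) := by
  intro h
  have h2 : (x : ZMod n) = (y : ZMod n) := add_left_cancel h
  have : x = y := by
    have hx' := ZMod.val_cast_of_lt hx
    have hy' := ZMod.val_cast_of_lt hy
    rw [← hx', ← hy', h2]
  exact hxy this

/-- With visibility `φ = 3` on a ring of `n > 13` nodes, in the Locked
configuration (robots at `i, i+3, i+6, i+9`) the two interior robots have views matching
Rule 3R3 (`1,0,0,(1),0,0,1` up to reversal). If both are activated simultaneously, moving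
toward each other, a 1.block of two adjacent robots (at `i+4, i+5`) is created whose
members see no other robots (all nodes within distance 3 on the outer sides are empty);
and any subsequent simultaneous activation of these two robots moving toward each other
(a swap) yields a configuration indistinguishable from the previous one. -/
theorem rule3R3_revisit (n : ℕ) [NeZero n] (hn : 13 < n) (i : ZMod n) :
    -- view of the interior robot at `i+3` in the Locked configuration matches Rule 3R3
    (four i (i+3) (i+6) (i+9) i = 1 ∧ four i (i+3) (i+6) (i+9) (i+1) = 0 ∧
      four i (i+3) (i+6) (i+9) (i+2) = 0 ∧ four i (i+3) (i+6) (i+9) (i+3) = 1 ∧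
      four i (i+3) (i+6) (i+9) (i+4) = 0 ∧ four i (i+3) (i+6) (i+9) (i+5) = 0 ∧
      four i (i+3) (i+6) (i+9) (i+6) = 1) ∧
    -- after both interior robots move toward each other: a 1.block at `i+4, i+5`
    (four i (i+4) (i+5) (i+9) (i+4) = 1 ∧ four i (i+4) (i+5) (i+9) (i+5) = 1) ∧
    -- whose members see no robot other than each other
    (∀ m : ℕ, 1 ≤ m → m ≤ 3 → four i (i+4) (i+5) (i+9) (i+4-m) = 0 ∧
      four i (i+4) (i+5) (i+9) (i+5+m) = 0) ∧
    -- a further simultaneous move of the two robots toward each other (a swap) gives a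
    -- configuration indistinguishable from the previous one
    Indist (four i (i+4) (i+5) (i+9)) (four i (i+5) (i+4) (i+9)) := by
  have ne : ∀ x y : ℕ, x < 14 → y < 14 → x ≠ y → i + (x : ZMod n) ≠ i + (y : ZMod n) := by
    intro x y hx hy hxy
    exact key_ne n i x y (by omega) (by omega) hxy
  refine ⟨⟨?_, ?_, ?_, ?_, ?_, ?_, ?_⟩, ⟨?_, ?_⟩, ?_, ?_⟩
  · simp [four]
  · rw [four, if_neg]
    push_neg
    exact ⟨by simpa using ne 1 0 (by norm_num) (by norm_num) (by norm_num),
           by simpa using ne 1 3 (by norm_num) (by norm_num) (by norm_num),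
           by simpa using ne 1 6 (by norm_num) (by norm_num) (by norm_num),
           by simpa using ne 1 9 (by norm_num) (by norm_num) (by norm_num)⟩
  · rw [four, if_neg]
    push_neg
    exact ⟨by simpa using ne 2 0 (by norm_num) (by norm_num) (by norm_num),
           by simpa using ne 2 3 (by norm_num) (by norm_num) (by norm_num),
           by simpa using ne 2 6 (by norm_num) (by norm_num) (by norm_num),
           by simpa using ne 2 9 (by norm_num) (by norm_num) (by norm_num)⟩
  · simp [four]
  · rw [four, if_neg]
    push_neg
    exact ⟨by simpa using ne 4 0 (by norm_num) (by norm_num) (by norm_num),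
           by simpa using ne 4 3 (by norm_num) (by norm_num) (by norm_num),
           by simpa using ne 4 6 (by norm_num) (by norm_num) (by norm_num),
           by simpa using ne 4 9 (by norm_num) (by norm_num) (by norm_num)⟩
  · rw [four, if_neg]
    push_neg
    exact ⟨by simpa using ne 5 0 (by norm_num) (by norm_num) (by norm_num),
           by simpa using ne 5 3 (by norm_num) (by norm_num) (by norm_num),
           by simpa using ne 5 6 (by norm_num) (by norm_num) (by norm_num),
           by simpa using ne 5 9 (by norm_num) (by norm_num) (by norm_num)⟩
  · simp [four]
  · simp [four]
  · simp [four]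
  · intro m h1 h3
    interval_cases m
    · constructor
      · have h' : i + 4 - ((1:ℕ) : ZMod n) = i + ((3:ℕ) : ZMod n) := by push_cast; ring
        rw [four, h', if_neg]
        push_neg
        exact ⟨by simpa using ne 3 0 (by norm_num) (by norm_num) (by norm_num),
               by simpa using ne 3 4 (by norm_num) (by norm_num) (by norm_num),
               by simpa using ne 3 5 (by norm_num) (by norm_num) (by norm_num),
               by simpa using ne 3 9 (by norm_num) (by norm_num) (by norm_num)⟩
      · have h' : i + 5 + ((1:ℕ) : ZMod n) = i + ((6:ℕ) : ZMod n) := by push_cast; ring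
        rw [four, h', if_neg]
        push_neg
        exact ⟨by simpa using ne 6 0 (by norm_num) (by norm_num) (by norm_num),
               by simpa using ne 6 4 (by norm_num) (by norm_num) (by norm_num),
               by simpa using ne 6 5 (by norm_num) (by norm_num) (by norm_num),
               by simpa using ne 6 9 (by norm_num) (by norm_num) (by norm_num)⟩
    · constructor
      · have h' : i + 4 - ((2:ℕ) : ZMod n) = i + ((2:ℕ) : ZMod n) := by push_cast; ring
        rw [four, h', if_neg]
        push_neg
        exact ⟨by simpa using ne 2 0 (by norm_num) (by norm_num) (by norm_num),
               by simpa using ne 2 4 (by norm_num) (by norm_num) (by norm_num),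
               by simpa using ne 2 5 (by norm_num) (by norm_num) (by norm_num),
               by simpa using ne 2 9 (by norm_num) (by norm_num) (by norm_num)⟩
      · have h' : i + 5 + ((2:ℕ) : ZMod n) = i + ((7:ℕ) : ZMod n) := by push_cast; ring
        rw [four, h', if_neg]
        push_neg
        exact ⟨by simpa using ne 7 0 (by norm_num) (by norm_num) (by norm_num),
               by simpa using ne 7 4 (by norm_num) (by norm_num) (by norm_num),
               by simpa using ne 7 5 (by norm_num) (by norm_num) (by norm_num),
               by simpa using ne 7 9 (by norm_num) (by norm_num) (by norm_num)⟩
    · constructor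
      · have h' : i + 4 - ((3:ℕ) : ZMod n) = i + ((1:ℕ) : ZMod n) := by push_cast; ring
        rw [four, h', if_neg]
        push_neg
        exact ⟨by simpa using ne 1 0 (by norm_num) (by norm_num) (by norm_num),
               by simpa using ne 1 4 (by norm_num) (by norm_num) (by norm_num),
               by simpa using ne 1 5 (by norm_num) (by norm_num) (by norm_num),
               by simpa using ne 1 9 (by norm_num) (by norm_num) (by norm_num)⟩
      · have h' : i + 5 + ((3:ℕ) : ZMod n) = i + ((8:ℕ) : ZMod n) := by push_cast; ring
        rw [four, h', if_neg]
        push_neg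
        exact ⟨by simpa using ne 8 0 (by norm_num) (by norm_num) (by norm_num),
               by simpa using ne 8 4 (by norm_num) (by norm_num) (by norm_num),
               by simpa using ne 8 5 (by norm_num) (by norm_num) (by norm_num),
               by simpa using ne 8 9 (by norm_num) (by norm_num) (by norm_num)⟩
  · refine ⟨0, Or.inl ?_⟩
    funext j
    simp only [rotate, add_zero, four]
    congr 1
    simp only [eq_iff_iff]
    tauto
end

section
/- If a deterministic protocol on a ring is such that from some reachable configuration γ the adversary can reach a configuration γ' ≠ γ with γ' indistinguishable from γ, then the protocol admits an infinite execution, hence does not solve terminating exploration. -/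
/-- A symmetry of the ring `ZMod n`: a rotation `j ↦ j + i` or a reflection `j ↦ i - j`. -/
def IsRingSym {n : ℕ} (σ : ZMod n → ZMod n) : Prop :=
  (∃ i, ∀ j, σ j = j + i) ∨ (∃ i, ∀ j, σ j = i - j)

lemma IsRingSym.comp {n : ℕ} {σ τ : ZMod n → ZMod n} (hσ : IsRingSym σ) (hτ : IsRingSym τ) :
    IsRingSym (σ ∘ τ) := by
  rcases hσ with ⟨i, hi⟩ | ⟨i, hi⟩ <;> rcases hτ with ⟨i', hi'⟩ | ⟨i', hi'⟩
  · exact Or.inl ⟨i' + i, fun j => by simp [hi, hi', add_assoc]⟩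
  · exact Or.inr ⟨i' + i, fun j => by simp [hi, hi']; ring⟩
  · exact Or.inr ⟨i - i', fun j => by simp [hi, hi']; ring⟩
  · exact Or.inl ⟨i - i', fun j => by simp [hi, hi']; ring⟩

lemma IsRingSym.iterate {n : ℕ} {σ : ZMod n → ZMod n} (hσ : IsRingSym σ) (k : ℕ) :
    IsRingSym (σ^[k]) := by
  induction k with
  | zero => exact Or.inl ⟨0, fun j => by simp⟩
  | succ k ih => rw [Function.iterate_succ]; exact ih.comp hσ

/-- Let `step` be the (protocol-plus-adversary) step relation on
configurations, equivariant under ring symmetries. If from an initial configuration `γ₀`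
a configuration `γ` is reachable and from `γ` the adversary can reach (in at least one
step) a configuration `γ' ≠ γ` indistinguishable from `γ` (i.e. `γ' = γ ∘ σ` for a ring
symmetry `σ`), then the protocol admits an infinite execution from `γ₀`, hence does not
solve terminating exploration. -/
theorem revisit_gives_infinite_execution (n : ℕ)
    (step : (ZMod n → ℕ) → (ZMod n → ℕ) → Prop)
    (hequi : ∀ (γ δ : ZMod n → ℕ) (σ : ZMod n → ZMod n),
      IsRingSym σ → step γ δ → step (γ ∘ σ) (δ ∘ σ))
    (γ₀ γ γ' : ZMod n → ℕ) (σ : ZMod n → ZMod n) (hσ : IsRingSym σ)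
    (hreach : Relation.ReflTransGen step γ₀ γ)
    (hsteps : Relation.TransGen step γ γ')
    (hne : γ' ≠ γ) (hγ' : γ' = γ ∘ σ) :
    ∃ e : ℕ → (ZMod n → ℕ), e 0 = γ₀ ∧ ∀ t, step (e t) (e (t + 1)) := by
  classical
  subst hγ'
  -- equivariance lifts to TransGen
  have hequiT : ∀ (a b : ZMod n → ℕ) (τ : ZMod n → ZMod n), IsRingSym τ →
      Relation.TransGen step a b → Relation.TransGen step (a ∘ τ) (b ∘ τ) := by
    intro a b τ hτ h
    induction h with
    | single h => exact Relation.TransGen.single (hequi _ _ _ hτ h)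
    | tail _ h ih => exact ih.tail (hequi _ _ _ hτ h)
  -- from γ∘σ^k we can move to γ∘σ^(k+1)
  have hmove : ∀ k : ℕ, Relation.TransGen step (γ ∘ σ^[k]) (γ ∘ σ^[k+1]) := by
    intro k
    have := hequiT γ (γ ∘ σ) (σ^[k]) (hσ.iterate k) hsteps
    have heq : (γ ∘ σ) ∘ σ^[k] = γ ∘ σ^[k+1] := by
      rw [Function.iterate_succ']; rfl
    rwa [heq] at this
  -- the invariant: from x we can reflexively-transitively reach some γ∘σ^k
  set P : (ZMod n → ℕ) → Prop := fun x => ∃ k, Relation.ReflTransGen step x (γ ∘ σ^[k])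
  have hP0 : P γ₀ := ⟨0, by simpa using hreach⟩
  have hnext : ∀ x, P x → ∃ y, step x y ∧ P y := by
    rintro x ⟨k, hk⟩
    rcases hk.cases_head with rfl | ⟨y, hxy, hyk⟩
    · rcases (Relation.TransGen.head'_iff.mp (hmove k)) with ⟨y, hxy, hyk⟩
      exact ⟨y, hxy, k + 1, hyk⟩
    · exact ⟨y, hxy, k, hyk⟩
  let next : {x // P x} → {x // P x} := fun x =>
    ⟨Classical.choose (hnext x.1 x.2), (Classical.choose_spec (hnext x.1 x.2)).2⟩
  have hstepnext : ∀ x : {x // P x}, step x.1 (next x).1 := fun x =>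
    (Classical.choose_spec (hnext x.1 x.2)).1
  refine ⟨fun t => (next^[t] ⟨γ₀, hP0⟩).1, rfl, fun t => ?_⟩
  show step (next^[t] ⟨γ₀, hP0⟩).1 (next^[t+1] ⟨γ₀, hP0⟩).1
  rw [Function.iterate_succ_apply']
  exact hstepnext _
end
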